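/- Subgradient certificate for prox-gradient on regularized least squares: if z⁺ = prox_{αΦ}(z − α Aᵀ(Az − a)) with α = 1/‖A‖₂², then the vector v = (‖A‖₂² I − AᵀA)(z − z⁺) satisfies v ∈ ∂̂p(z⁺) where p(z) = (1/2)‖Az − a‖² + Φ(z) and ∂̂ denotes the Fréchet (regular) subdifferential. -/

import Mathlib

/-- Fréchet (regular) subdifferential of an extended-real-valued function. -/
def frechetSubdiff {n : ℕ} (p : EuclideanSpace ℝ (Fin n) → EReal)
    (x : EuclideanSpace ℝ (Fin n)) : Set (EuclideanSpace ℝ (Fin n)) :=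
  {v | ∀ ε : ℝ, 0 < ε → ∀ᶠ u in nhds x,
    p x + (((inner ℝ v (u - x) : ℝ) - ε * ‖u - x‖ : ℝ) : EReal) ≤ p u}

/-!
Write `L = ‖A‖²` and `w = z - α Aᵀ(Az - a)`, so that `L (z - w) = Aᵀ(Az - a)`. Expanding the squares
in the prox inequality at a competitor `u`, with `δ = u - z⁺`, everything cancels except
`-(L/2)‖δ‖²` and the nonnegative term `½‖Aδ‖²`. Hence `v` is a proximal subgradient:
`p u ≥ p z⁺ + ⟪v, δ⟫ - (L/2)‖δ‖²` for every `u`, and since `‖δ‖² = o(‖δ‖)` it is a Fréchet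
subgradient.
-/

open Asymptotics Filter ContinuousLinearMap

theorem EReal.coe_add_add_coe_le_coe_add {c₁ c₂ r s t : ℝ} {φ ψ : EReal}
    (h : (s : EReal) + φ ≤ t + ψ) (hc : c₁ + r + t ≤ c₂ + s) :
    (c₁ : EReal) + φ + r ≤ c₂ + ψ :=
  calc (c₁ : EReal) + φ + r = ((c₁ + r - s : ℝ) : EReal) + (s + φ) := by
        rw [← add_assoc, ← EReal.coe_add, _root_.sub_add_cancel (c₁ + r) s, EReal.coe_add,
          add_right_comm]
    _ ≤ ((c₁ + r - s : ℝ) : EReal) + (t + ψ) := by gcongr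
    _ = ((c₁ + r - s + t : ℝ) : EReal) + ψ := by rw [← add_assoc, EReal.coe_add]
    _ ≤ c₂ + ψ := by gcongr; linarith

theorem mem_frechetSubdiff_of_quadratic_lower_bound {n : ℕ}
    {p : EuclideanSpace ℝ (Fin n) → EReal}
    {x v : EuclideanSpace ℝ (Fin n)} (C : ℝ)
    (h : ∀ u, p x + ((inner ℝ v (u - x) - C * ‖u - x‖ ^ 2 : ℝ) : EReal) ≤ p u) :
    v ∈ frechetSubdiff p x := by
  intro ε hε
  have hsmall : ∀ᶠ u in nhds x, C * ‖u - x‖ ^ 2 ≤ ε * ‖u - x‖ := by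
    filter_upwards [((isLittleO_pow_sub_sub x one_lt_two).const_mul_left C).def hε]
      with u hu
    simpa using (le_abs_self _).trans hu
  filter_upwards [hsmall] with u hu
  refine le_trans ?_ (h u)
  gcongr

theorem least_squares_prox_step_le {E F : Type*}
    [NormedAddCommGroup E] [InnerProductSpace ℝ E] [CompleteSpace E]
    [NormedAddCommGroup F] [InnerProductSpace ℝ F] [CompleteSpace F]
    (A : E →L[ℝ] F) (a : F) {L : ℝ} {z w : E}
    (hw : L • (z - w) = adjoint A (A z - a)) (x u : E) :
    1 / 2 * ‖A x - a‖ ^ 2 + (inner ℝ (L • (z - x) - adjoint A (A (z - x))) (u - x)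
        - L / 2 * ‖u - x‖ ^ 2) + L / 2 * ‖u - w‖ ^ 2
      ≤ 1 / 2 * ‖A u - a‖ ^ 2 + L / 2 * ‖x - w‖ ^ 2 := by
  set δ := u - x
  have hAu : ‖A u - a‖ ^ 2 = ‖A x - a‖ ^ 2 + 2 * inner ℝ (A x - a) (A δ) + ‖A δ‖ ^ 2 := by
    rw [← norm_add_sq_real, map_sub, sub_add_sub_cancel']
  have huw : ‖u - w‖ ^ 2 = ‖x - w‖ ^ 2 + 2 * inner ℝ (x - w) δ + ‖δ‖ ^ 2 := by
    rw [← norm_add_sq_real, sub_add_sub_cancel']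
  have hv : inner ℝ (L • (z - x) - adjoint A (A (z - x))) δ
      = inner ℝ (A x - a) (A δ) - L * inner ℝ (x - w) δ := by
    have : L • (z - x) - adjoint A (A (z - x)) = adjoint A (A x - a) - L • (x - w) :=
      calc L • (z - x) - adjoint A (A (z - x))
          = L • (z - w) - L • (x - w) - adjoint A (A (z - x)) := by
            rw [← smul_sub, sub_sub_sub_cancel_right]
        _ = adjoint A (A x - a) - L • (x - w) := by
            rw [hw]
            simp only [map_sub]
            abel
    rw [this, inner_sub_left, adjoint_inner_left, real_inner_smul_left]
  rw [hAu, huw, hv]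
  nlinarith [sq_nonneg ‖A δ‖]

theorem prox_gradient_subgradient_general (n m : ℕ)
    (A : EuclideanSpace ℝ (Fin n) →L[ℝ] EuclideanSpace ℝ (Fin m))
    (a : EuclideanSpace ℝ (Fin m)) (hA : A ≠ 0)
    (Φ : EuclideanSpace ℝ (Fin n) → EReal)
    (α : ℝ) (hα : α = 1 / ‖A‖ ^ 2)
    (p : EuclideanSpace ℝ (Fin n) → EReal)
    (hp : p = fun z => (((1 / 2) * ‖A z - a‖ ^ 2 : ℝ) : EReal) + Φ z)
    (z zp : EuclideanSpace ℝ (Fin n))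
    (hprox : ∀ u,
      (((1 / (2 * α)) * ‖zp - (z - α • (ContinuousLinearMap.adjoint A) (A z - a))‖ ^ 2 : ℝ) : EReal)
          + Φ zp ≤
      (((1 / (2 * α)) * ‖u - (z - α • (ContinuousLinearMap.adjoint A) (A z - a))‖ ^ 2 : ℝ) : EReal)
          + Φ u) :
    ‖A‖ ^ 2 • (z - zp) - (ContinuousLinearMap.adjoint A) (A (z - zp)) ∈
      frechetSubdiff p zp := by
  subst hp
  have hL : ‖A‖ ^ 2 ≠ 0 := pow_ne_zero 2 (norm_ne_zero_iff.2 hA)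
  have hcoef : 1 / (2 * α) = ‖A‖ ^ 2 / 2 := by rw [hα]; field_simp
  have hw : ‖A‖ ^ 2 • (z - (z - α • adjoint A (A z - a))) = adjoint A (A z - a) := by
    rw [sub_sub_cancel, smul_smul, hα, mul_one_div_cancel hL, one_smul]
  refine mem_frechetSubdiff_of_quadratic_lower_bound (‖A‖ ^ 2 / 2) fun u => ?_
  have hprox_u := hprox u
  rw [hcoef] at hprox_u
  exact EReal.coe_add_add_coe_le_coe_add hprox_u (least_squares_prox_step_le A a hw zp u)

/-- Subgradient certificate for prox-gradient on regularized least squares: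
v = (‖A‖² I − AᵀA)(z − z⁺) is a Fréchet subgradient of p at z⁺. -/
theorem prox_gradient_subgradient (n m : ℕ)
    (A : EuclideanSpace ℝ (Fin n) →L[ℝ] EuclideanSpace ℝ (Fin m))
    (a : EuclideanSpace ℝ (Fin m)) (hA : A ≠ 0)
    (Φ : EuclideanSpace ℝ (Fin n) → EReal)
    (hbot : ∀ z, Φ z ≠ ⊥) (hproper : ∃ z, Φ z ≠ ⊤)
    (hlsc : LowerSemicontinuous Φ)
    (hbdd : ∃ mlb : ℝ, ∀ z, (mlb : EReal) ≤ Φ z)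
    (α : ℝ) (hα : α = 1 / ‖A‖ ^ 2)
    (p : EuclideanSpace ℝ (Fin n) → EReal)
    (hp : p = fun z => (((1 / 2) * ‖A z - a‖ ^ 2 : ℝ) : EReal) + Φ z)
    (z zp : EuclideanSpace ℝ (Fin n))
    (hprox : ∀ u,
      (((1 / (2 * α)) * ‖zp - (z - α • (ContinuousLinearMap.adjoint A) (A z - a))‖ ^ 2 : ℝ) : EReal)
          + Φ zp ≤
      (((1 / (2 * α)) * ‖u - (z - α • (ContinuousLinearMap.adjoint A) (A z - a))‖ ^ 2 : ℝ) : EReal)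
          + Φ u) :
    ‖A‖ ^ 2 • (z - zp) - (ContinuousLinearMap.adjoint A) (A (z - zp)) ∈
      frechetSubdiff p zp :=
  prox_gradient_subgradient_general n m A a hA Φ α hα p hp z zp hprox
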